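/- arXiv:1108.2339 — 10 statements merged into one kernel-verified Lean document; each statement's English description precedes it below -/
import Mathlib

section
/- If A_1,...,A_n are finite sets such that the intersection of any k of them (2 ≤ k ≤ n) is empty, then the number of elements of A_1 ∪ ... ∪ A_n is at least (|A_1| + |A_2| + ... + |A_n|)/(k-1). -/
/-- If `A 1, ..., A n` are finite sets such that the intersection of any `k` of them
(`2 ≤ k ≤ n`) is empty, then `|A 1 ∪ ... ∪ A n| ≥ (|A 1| + ... + |A n|)/(k-1)`. -/
theorem stmt0 (n k : ℕ) (hk : 2 ≤ k) (hkn : k ≤ n) (A : Fin n → Set ℕ)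
    (hfin : ∀ i, (A i).Finite)
    (hempty : ∀ s : Finset (Fin n), s.card = k → (⋂ i ∈ s, A i) = ∅) :
    ((∑ i, (A i).ncard : ℝ)) / (k - 1) ≤ ((⋃ i, A i).ncard : ℝ) := by
  set B : Fin n → Finset ℕ := fun i => (hfin i).toFinset with hB
  set U : Finset ℕ := Finset.univ.biUnion B with hU
  have hAi : ∀ i, A i = ↑(B i) := fun i => ((hfin i).coe_toFinset).symm
  have hUeq : (⋃ i, A i) = ↑U := by
    simp [hU, Finset.coe_biUnion, hAi]
  -- key: each x in U lies in at most k-1 of the B i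
  have hkey : ∀ x ∈ U, (Finset.univ.filter (fun i => x ∈ B i)).card ≤ k - 1 := by
    intro x hx
    by_contra h
    push_neg at h
    have hk' : k ≤ (Finset.univ.filter (fun i => x ∈ B i)).card := by omega
    obtain ⟨s, hs, hcard⟩ := Finset.exists_subset_card_eq hk'
    have := hempty s hcard
    have hxmem : x ∈ ⋂ i ∈ s, A i := by
      simp only [Set.mem_iInter]
      intro i hi
      have := hs hi
      simp only [Finset.mem_filter] at this
      rw [hAi i]
      exact_mod_cast this.2
    rw [this] at hxmem
    exact hxmem
  -- double counting
  have hdc : ∑ i, (B i).card ≤ (k - 1) * U.card := by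
    have hsub : ∀ i, B i ⊆ U := fun i => Finset.subset_biUnion_of_mem B (Finset.mem_univ i)
    have h1 : ∑ i, (B i).card = ∑ x ∈ U, (Finset.univ.filter (fun i => x ∈ B i)).card := by
      have : ∀ i : Fin n, (B i).card = ∑ x ∈ U, if x ∈ B i then 1 else 0 := by
        intro i
        rw [Finset.sum_boole, Finset.filter_mem_eq_inter,
          Finset.inter_eq_right.mpr (hsub i)]
        simp
      simp only [this]
      rw [Finset.sum_comm]
      refine Finset.sum_congr rfl fun x _ => ?_
      rw [Finset.sum_boole]
      simp
    rw [h1]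
    calc ∑ x ∈ U, (Finset.univ.filter (fun i => x ∈ B i)).card
        ≤ ∑ _x ∈ U, (k - 1) := Finset.sum_le_sum hkey
      _ = (k - 1) * U.card := by rw [Finset.sum_const]; ring
  have hkpos : (0 : ℝ) < (k : ℝ) - 1 := by
    have : (2 : ℝ) ≤ k := by exact_mod_cast hk
    linarith
  rw [div_le_iff₀ hkpos]
  have hsum : ∀ i, (A i).ncard = (B i).card := by
    intro i; rw [hAi i, Set.ncard_coe_finset]
  rw [hUeq, Set.ncard_coe_finset]
  have hcast : ((∑ i, (B i).card : ℕ) : ℝ) ≤ (((k - 1) * U.card : ℕ) : ℝ) := by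
    exact_mod_cast hdc
  push_cast at hcast
  have hk1 : ((k - 1 : ℕ) : ℝ) = (k : ℝ) - 1 := by
    have : 1 ≤ k := by omega
    push_cast [this]; ring
  simp only [hsum]
  push_cast
  rw [hk1] at hcast
  linarith
end

section
/- If A_1,...,A_n are measurable sets of finite measure in a measure space such that the intersection of any k of them (2 ≤ k ≤ n) has measure zero, then μ(A_1 ∪ ... ∪ A_n) ≥ (μ(A_1) + ... + μ(A_n))/(k-1). -/
open MeasureTheory

/-- If `A 1, ..., A n` are measurable sets of finite measure such that the intersection of
any `k` of them (`2 ≤ k ≤ n`) has measure zero, then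
`μ(A 1 ∪ ... ∪ A n) ≥ (μ(A 1) + ... + μ(A n))/(k-1)`. -/
theorem stmt1 {X : Type*} [MeasurableSpace X] (μ : Measure X) (n k : ℕ)
    (hk : 2 ≤ k) (hkn : k ≤ n) (A : Fin n → Set X)
    (hmeas : ∀ i, MeasurableSet (A i)) (hfin : ∀ i, μ (A i) < ⊤)
    (hzero : ∀ s : Finset (Fin n), s.card = k → μ (⋂ i ∈ s, A i) = 0) :
    (∑ i, μ (A i)) / ((k - 1 : ℕ) : ENNReal) ≤ μ (⋃ i, A i) := by
  classical
  have hk1 : ((k - 1 : ℕ) : ENNReal) ≠ 0 := by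
    simp only [ne_eq, Nat.cast_eq_zero]; omega
  rw [ENNReal.div_le_iff hk1 (ENNReal.natCast_ne_top _)]
  have hU : MeasurableSet (⋃ i, A i) := MeasurableSet.iUnion fun i => hmeas i
  have hN : μ (⋃ (s : Finset (Fin n)) (_ : s.card = k), ⋂ i ∈ s, A i) = 0 := by
    rw [measure_iUnion_null_iff]
    intro s
    rw [measure_iUnion_null_iff]
    intro hs
    exact hzero s hs
  have key : ∀ x, x ∉ (⋃ (s : Finset (Fin n)) (_ : s.card = k), ⋂ i ∈ s, A i) →
      ∑ i, (A i).indicator (fun _ => (1 : ENNReal)) x ≤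
        (⋃ i, A i).indicator (fun _ => ((k - 1 : ℕ) : ENNReal)) x := by
    intro x hx
    by_cases hxU : x ∈ ⋃ i, A i
    · rw [Set.indicator_of_mem hxU]
      have hcard : (Finset.univ.filter (fun i => x ∈ A i)).card ≤ k - 1 := by
        by_contra h
        push_neg at h
        obtain ⟨t, ht, htc⟩ := Finset.exists_subset_card_eq (show k ≤ (Finset.univ.filter (fun i => x ∈ A i)).card by omega)
        exact hx (Set.mem_iUnion₂.mpr ⟨t, htc, Set.mem_iInter₂.mpr fun i hi =>
          (Finset.mem_filter.mp (ht hi)).2⟩)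
      calc ∑ i, (A i).indicator (fun _ => (1 : ENNReal)) x
          = ∑ i ∈ Finset.univ.filter (fun i => x ∈ A i), 1 := by
            rw [Finset.sum_filter]
            refine Finset.sum_congr rfl fun i _ => ?_
            by_cases h : x ∈ A i <;> simp [Set.indicator, h]
        _ = ((Finset.univ.filter (fun i => x ∈ A i)).card : ENNReal) := by simp
        _ ≤ ((k - 1 : ℕ) : ENNReal) := by exact_mod_cast hcard
    · rw [Set.indicator_of_notMem hxU]
      have h0 : ∀ i, (A i).indicator (fun _ => (1 : ENNReal)) x = 0 := fun i =>
        Set.indicator_of_notMem (fun h => hxU (Set.mem_iUnion.mpr ⟨i, h⟩)) _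
      simp [h0]
  calc ∑ i, μ (A i) = ∫⁻ x, ∑ i, (A i).indicator (fun _ => (1 : ENNReal)) x ∂μ := by
        rw [lintegral_finset_sum]
        · exact Finset.sum_congr rfl fun i _ => (lintegral_indicator_one (hmeas i)).symm
        · exact fun i _ => measurable_const.indicator (hmeas i)
    _ ≤ ∫⁻ x, (⋃ i, A i).indicator (fun _ => ((k - 1 : ℕ) : ENNReal)) x ∂μ := by
        refine lintegral_mono_ae ?_
        filter_upwards [measure_eq_zero_iff_ae_notMem.mp hN] with x hx using key x hx
    _ = μ (⋃ i, A i) * ((k - 1 : ℕ) : ENNReal) := by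
        rw [lintegral_indicator_const hU, mul_comm]
end

section
/- Let a_1,...,a_n be nonnegative reals with max{a_1,...,a_n} ≤ ā, where ā = (a_1 + ... + a_n)/(n-1). Then there exist Lebesgue measurable subsets A_1,...,A_n of ℝ with μ(A_i) = a_i for all i, μ(A_1 ∪ ... ∪ A_n) = ā, and A_1 ∩ A_2 ∩ ... ∩ A_n = ∅. -/
open MeasureTheory

/-- If `a 1, ..., a n` are nonnegative reals with `max a i ≤ ā = (∑ a i)/(n-1)`, then there
are Lebesgue measurable `A i ⊆ ℝ` with `μ(A i) = a i`, `μ(⋃ A i) = ā` and `⋂ A i = ∅`. -/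
theorem stmt2 (n : ℕ) (hn : 2 ≤ n) (a : Fin n → ℝ) (ha : ∀ i, 0 ≤ a i)
    (hmax : ∀ i, a i ≤ (∑ j, a j) / (n - 1)) :
    ∃ A : Fin n → Set ℝ, (∀ i, MeasurableSet (A i)) ∧
      (∀ i, volume (A i) = ENNReal.ofReal (a i)) ∧
      volume (⋃ i, A i) = ENNReal.ofReal ((∑ j, a j) / (n - 1)) ∧
      (⋂ i, A i) = ∅ := by
  set S := ∑ j, a j with hS
  set v : ℝ := S / (n - 1) with hv
  have hn1 : (1:ℝ) ≤ (n:ℝ) - 1 := by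
    have h2 : (2:ℝ) ≤ (n:ℝ) := by exact_mod_cast hn
    linarith
  have hSv : S = ((n:ℝ) - 1) * v := by
    rw [hv]; field_simp
  set b : ℕ → ℝ := fun j => if h : j < n then v - a ⟨j, h⟩ else 0 with hb
  have hb0 : ∀ j, 0 ≤ b j := by
    intro j
    by_cases h : j < n
    · simp only [hb, h, dif_pos]
      linarith [hmax ⟨j, h⟩]
    · simp [hb, h]
  set c : ℕ → ℝ := fun k => ∑ j ∈ Finset.range k, b j with hc
  have hcmono : Monotone c := by
    intro k l hkl
    exact Finset.sum_le_sum_of_subset_of_nonneg (Finset.range_subset_range.mpr hkl)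
      (fun j _ _ => hb0 j)
  have hc0 : c 0 = 0 := by simp [hc]
  have hcsucc : ∀ k, c (k + 1) = c k + b k := by
    intro k; simp [hc, Finset.sum_range_succ]
  have hcn : c n = v := by
    have h1 : c n = ∑ i : Fin n, (v - a i) := by
      show (∑ j ∈ Finset.range n, b j) = _
      rw [← Fin.sum_univ_eq_sum_range (fun j => b j) n]
      refine Finset.sum_congr rfl fun i _ => ?_
      simp [hb, i.isLt]
    rw [h1, Finset.sum_sub_distrib, Finset.sum_const, Finset.card_univ,
      Fintype.card_fin, ← hS, nsmul_eq_mul, hSv]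
    ring
  set A : Fin n → Set ℝ := fun i => Set.Ico 0 v \ Set.Ico (c i) (c (i + 1)) with hA
  have hAsub : ∀ i, A i ⊆ Set.Ico 0 v := fun i => Set.diff_subset
  refine ⟨A, fun i => (measurableSet_Ico.diff measurableSet_Ico), ?_, ?_, ?_⟩
  · intro i
    have hsub : Set.Ico (c i) (c (i + 1)) ⊆ Set.Ico 0 v :=
      Set.Ico_subset_Ico (hc0 ▸ hcmono (Nat.zero_le _)) (hcn ▸ hcmono i.isLt)
    have hbv : b (i : ℕ) = v - a i := by simp [hb, i.isLt]
    rw [hA, measure_diff hsub measurableSet_Ico.nullMeasurableSet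
        (by exact measure_Ico_lt_top.ne),
      Real.volume_Ico, Real.volume_Ico, hcsucc, sub_zero]
    rw [show c (i : ℕ) + b (i : ℕ) - c (i : ℕ) = b (i : ℕ) by ring, hbv,
      ← ENNReal.ofReal_sub _ (by linarith [hmax i])]
    ring_nf
  · have hun : ⋃ i, A i = Set.Ico 0 v := by
      apply Set.Subset.antisymm
      · exact Set.iUnion_subset hAsub
      · intro x hx
        by_cases h1 : x < c 1
        · refine Set.mem_iUnion.mpr ⟨⟨1, by omega⟩, hx, ?_⟩
          intro hmem
          exact absurd hmem.1 (not_le.mpr h1)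
        · refine Set.mem_iUnion.mpr ⟨⟨0, by omega⟩, hx, ?_⟩
          intro hmem
          exact h1 hmem.2
    rw [hun, Real.volume_Ico, sub_zero]
  · ext x
    simp only [Set.mem_iInter, Set.mem_empty_iff_false, iff_false]
    intro h
    have hx : x ∈ Set.Ico 0 v := hAsub ⟨0, by omega⟩ (h ⟨0, by omega⟩)
    have hex : ∃ k, x < c k := ⟨n, hcn ▸ hx.2⟩
    set m := Nat.find hex with hm
    have hxm : x < c m := Nat.find_spec hex
    have hm0 : m ≠ 0 := by
      intro h0
      rw [h0, hc0] at hxm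
      exact absurd hx.1 (not_le.mpr hxm)
    have hmn : m ≤ n := Nat.find_le (hcn ▸ hx.2)
    have hle : c (m - 1) ≤ x := by
      by_contra hlt
      exact Nat.find_min hex (Nat.sub_lt (Nat.pos_of_ne_zero hm0) one_pos) (not_le.mp hlt)
    have hi : m - 1 < n := by omega
    have := h ⟨m - 1, hi⟩
    refine this.2 ⟨hle, ?_⟩
    rwa [show m - 1 + 1 = m by omega]
end

section
/- Let a_1,...,a_n be nonnegative integers with max{a_1,...,a_n} ≤ ā where ā = (a_1+...+a_n)/(n-1) is assumed to be an integer. Then there exist finite sets A_1,...,A_n with |A_i| = a_i, |A_1 ∪ ... ∪ A_n| = ā, and A_1 ∩ ... ∩ A_n = ∅. -/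
/-- If `a 1, ..., a n` are nonnegative integers, `(n-1) ∣ ∑ a i`, and each
`a i ≤ ā = (∑ a i)/(n-1)`, then there are finite sets `A i` with `|A i| = a i`,
`|⋃ A i| = ā` and `⋂ A i = ∅`. -/
theorem stmt3 (n : ℕ) (hn : 2 ≤ n) (a : Fin n → ℕ)
    (hdvd : (n - 1) ∣ ∑ j, a j)
    (hmax : ∀ i, a i ≤ (∑ j, a j) / (n - 1)) :
    ∃ A : Fin n → Set ℕ, (∀ i, (A i).Finite) ∧
      (∀ i, (A i).ncard = a i) ∧
      (⋃ i, A i).ncard = (∑ j, a j) / (n - 1) ∧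
      (⋂ i, A i) = ∅ := by
  have hne : Nonempty (Fin n) := ⟨⟨0, by omega⟩⟩
  set S := ∑ j, a j with hSdef
  set m := S / (n - 1) with hmdef
  have hS : (n - 1) * m = S := Nat.mul_div_cancel' hdvd
  by_cases hm0 : m = 0
  · have ha : ∀ i, a i = 0 := fun i => Nat.le_zero.mp (hm0 ▸ hmax i)
    refine ⟨fun _ => ∅, fun _ => Set.finite_empty, fun i => by simp [ha i], by simp [hm0], ?_⟩
    ext x; simp
  have hm : 0 < m := Nat.pos_of_ne_zero hm0
  -- extend a to ℕ and take partial sums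
  set b : ℕ → ℕ := fun j => if h : j < n then a ⟨j, h⟩ else 0 with hbdef
  set s : ℕ → ℕ := fun k => ∑ j ∈ Finset.range k, b j with hsdef
  have hsn : s n = S := by
    show ∑ j ∈ Finset.range n, b j = ∑ j, a j
    rw [← Fin.sum_univ_eq_sum_range b n]
    exact Finset.sum_congr rfl (fun i _ => by simp [hbdef, i.isLt])
  have hstep : ∀ i : Fin n, s ((i : ℕ) + 1) = s i + a i := by
    intro i
    simp [hsdef, Finset.sum_range_succ, hbdef, i.isLt]
  have hmono : Monotone s := fun k l h =>
    Finset.sum_le_sum_of_subset (Finset.range_subset_range.2 h)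
  -- the sets
  set A : Fin n → Set ℕ := fun i => (· % m) '' Set.Ico (s i) (s i + a i) with hAdef
  have hinj : ∀ i : Fin n, Set.InjOn (· % m) (Set.Ico (s i) (s i + a i)) := by
    intro i t ht t' ht' h
    simp only [Set.mem_Ico] at ht ht'
    rcases le_total t t' with hle | hle
    · have hdv : m ∣ t' - t := (Nat.modEq_iff_dvd' hle).mp h
      have h1 : t' - t < m := by have := hmax i; omega
      have := Nat.eq_zero_of_dvd_of_lt hdv h1
      omega
    · have hdv : m ∣ t - t' := (Nat.modEq_iff_dvd' hle).mp h.symm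
      have h1 : t - t' < m := by have := hmax i; omega
      have := Nat.eq_zero_of_dvd_of_lt hdv h1
      omega
  have hcard : ∀ i, (A i).ncard = a i := by
    intro i
    rw [hAdef]
    rw [Set.ncard_image_of_injOn (hinj i)]
    rw [show Set.Ico (s i) (s ↑i + a i) = ↑(Finset.Ico (s i) (s i + a i)) by
      ext x; simp]
    rw [Set.ncard_coe_finset, Nat.card_Ico]
    omega
  -- every t < S lies in exactly one interval
  have hfind : ∀ t, t < S → ∃ i : Fin n, s i ≤ t ∧ t < s i + a i := by
    intro t ht
    set P : ℕ → Prop := fun k => s k ≤ t with hP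
    have h0 : P 0 := by simp [hP, hsdef]
    set i := Nat.findGreatest P n with hi
    have hPi : P i := Nat.findGreatest_spec (Nat.zero_le n) h0
    have hile : i ≤ n := Nat.findGreatest_le n
    have hin : i < n := by
      rcases lt_or_eq_of_le hile with h | h
      · exact h
      · exfalso; rw [h] at hPi; simp only [hP] at hPi; omega
    refine ⟨⟨i, hin⟩, hPi, ?_⟩
    have := hstep ⟨i, hin⟩
    simp only at this
    rw [← this]
    by_contra hc
    push_neg at hc
    have hP1 : P (i + 1) := hc
    have := Nat.le_findGreatest (P := P) hin hP1
    omega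
  -- disjointness of intervals
  have hdisj : ∀ (i i' : Fin n) (t : ℕ), s i ≤ t → t < s i + a i →
      s i' ≤ t → t < s i' + a i' → i = i' := by
    intro i i' t h1 h2 h3 h4
    by_contra hne'
    rcases Fin.lt_or_lt_of_ne hne' with h | h
    · have : s ((i : ℕ) + 1) ≤ s i' := hmono (by exact_mod_cast h)
      rw [hstep i] at this; omega
    · have : s ((i' : ℕ) + 1) ≤ s i := hmono (by exact_mod_cast h)
      rw [hstep i'] at this; omega
  refine ⟨A, fun i => (Set.finite_Ico _ _).image _, hcard, ?_, ?_⟩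
  · -- union has ncard m
    have hun : (⋃ i, A i) = Set.Iio m := by
      ext x
      simp only [Set.mem_iUnion, hAdef, Set.mem_image, Set.mem_Ico, Set.mem_Iio]
      constructor
      · rintro ⟨i, t, _, rfl⟩
        exact Nat.mod_lt _ hm
      · intro hx
        have hxS : x < S := by
          have h1 : 1 * m ≤ (n - 1) * m := Nat.mul_le_mul_right m (by omega)
          omega
        obtain ⟨i, h1, h2⟩ := hfind x hxS
        exact ⟨i, x, ⟨h1, h2⟩, Nat.mod_eq_of_lt hx⟩
    rw [hun, show Set.Iio m = ↑(Finset.range m) by ext x; simp,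
      Set.ncard_coe_finset, Finset.card_range]
  · -- intersection empty
    ext x
    simp only [Set.mem_iInter, Set.mem_empty_iff_false, iff_false]
    intro hx
    have hx' : ∀ i : Fin n, ∃ t, s i ≤ t ∧ t < s i + a i ∧ t % m = x := by
      intro i
      obtain ⟨t, ht, h⟩ := hx i
      simp only [Set.mem_Ico] at ht
      exact ⟨t, ht.1, ht.2, h⟩
    choose t ht1 ht2 ht3 using hx'
    have hxm : x < m := by
      have := ht3 ⟨0, by omega⟩; rw [← this]; exact Nat.mod_lt _ hm
    have htS : ∀ i, t i < S := by
      intro i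
      have : s ((i : ℕ) + 1) = s i + a i := hstep i
      have h2 : s ((i : ℕ) + 1) ≤ s n := hmono (by omega)
      rw [hsn] at h2; have := ht2 i; omega
    have htinj : Function.Injective t := by
      intro i i' h
      exact hdisj i i' (t i) (ht1 i) (ht2 i) (h ▸ ht1 i') (h ▸ ht2 i')
    -- t i = (t i / m) * m + x, with t i / m < n - 1
    have hk : ∀ i, t i / m < n - 1 := by
      intro i
      have h1 : t i = m * (t i / m) + x := by
        conv_lhs => rw [← Nat.div_add_mod (t i) m]
        rw [ht3 i]
      have h2 : t i < (n - 1) * m := by rw [hS]; exact htS i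
      by_contra hc
      push_neg at hc
      have h3 : m * (n - 1) ≤ m * (t i / m) := Nat.mul_le_mul_left m hc
      have h4 : m * (n - 1) = (n - 1) * m := Nat.mul_comm _ _
      omega
    have hkinj : Function.Injective (fun i : Fin n => (⟨t i / m, hk i⟩ : Fin (n - 1))) := by
      intro i i' h
      simp only [Fin.mk.injEq] at h
      apply htinj
      have h1 : t i = m * (t i / m) + x := by
        conv_lhs => rw [← Nat.div_add_mod (t i) m]; rw [ht3 i]
      have h2 : t i' = m * (t i' / m) + x := by
        conv_lhs => rw [← Nat.div_add_mod (t i') m]; rw [ht3 i']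
      rw [h1, h2, h]
    have := Fintype.card_le_of_injective _ hkinj
    simp only [Fintype.card_fin] at this
    omega
end

section
/- Given nonnegative reals a_1,...,a_n and 2 ≤ k ≤ n, set ā = (a_1+...+a_n)/(k-1). For any real a with max{a_1,...,a_n, ā} ≤ a ≤ a_1+...+a_n, there exist Lebesgue measurable subsets A_1,...,A_n of ℝ with μ(A_i) = a_i for all i, μ(A_1 ∪ ... ∪ A_n) = a, and the intersection of any k of the sets A_i is empty. -/
open MeasureTheory Set

/-- Given nonnegative reals `a i`, `2 ≤ k ≤ n`, `ā = (∑ a i)/(k-1)`, and any real `a` with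
`max {a i, ā} ≤ a ≤ ∑ a i`, there exist measurable `A i ⊆ ℝ` with `μ(A i) = a i`,
`μ(⋃ A i) = a`, and any `k` of the `A i` having empty intersection. -/
theorem stmt4 (n k : ℕ) (hn : 2 ≤ n) (hk : 2 ≤ k) (hkn : k ≤ n)
    (a : Fin n → ℝ) (ha : ∀ i, 0 ≤ a i) (t : ℝ)
    (hmax : ∀ i, a i ≤ t) (hbar : (∑ j, a j) / (k - 1) ≤ t)
    (hupper : t ≤ ∑ j, a j) :
    ∃ A : Fin n → Set ℝ, (∀ i, MeasurableSet (A i)) ∧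
      (∀ i, volume (A i) = ENNReal.ofReal (a i)) ∧
      volume (⋃ i, A i) = ENNReal.ofReal t ∧
      (∀ s : Finset (Fin n), s.card = k → (⋂ i ∈ s, A i) = ∅) := by
  classical
  have ht0 : 0 ≤ t := le_trans (ha ⟨0, by omega⟩) (hmax ⟨0, by omega⟩)
  rcases eq_or_lt_of_le ht0 with ht | ht
  · -- degenerate case t = 0
    have ha0 : ∀ i, a i = 0 := fun i => le_antisymm (ht ▸ hmax i) (ha i)
    refine ⟨fun _ => ∅, fun _ => MeasurableSet.empty, fun i => by simp [ha0 i], by simp [← ht],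
      fun s hs => ?_⟩
    have hne : s.Nonempty := Finset.card_pos.mp (by omega)
    obtain ⟨i, hi⟩ := hne
    apply Set.eq_empty_iff_forall_notMem.mpr
    intro x hx
    exact (Set.mem_iInter₂.mp hx i hi : x ∈ (∅ : Set ℝ))
  · -- main case t > 0
    have hk1 : (1:ℝ) ≤ (k:ℝ) - 1 := by
      have : (2:ℝ) ≤ (k:ℝ) := by exact_mod_cast hk
      linarith
    have hS : ∑ j, a j ≤ ((k:ℝ) - 1) * t := by
      rw [div_le_iff₀ (by linarith)] at hbar
      linarith [hbar]
    set c : Fin n → ℝ := fun i => ∑ j ∈ Finset.Iio i, a j with hc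
    have hc0 : ∀ i, 0 ≤ c i := fun i => Finset.sum_nonneg fun j _ => ha j
    have hcext : ∀ i, c i + a i = ∑ j ∈ Finset.Iic i, a j := by
      intro i
      rw [← Finset.Iio_insert, Finset.sum_insert (by simp), hc, add_comm]
    have hmono : ∀ i j : Fin n, i < j → c i + a i ≤ c j := by
      intro i j hij
      rw [hcext]
      apply Finset.sum_le_sum_of_subset_of_nonneg
      · intro x hx
        simp only [Finset.mem_Iic] at hx
        simp only [Finset.mem_Iio]
        exact lt_of_le_of_lt hx hij
      · intro j _ _; exact ha j
    have hcS : ∀ i, c i + a i ≤ ∑ j, a j := by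
      intro i
      rw [hcext]
      exact Finset.sum_le_sum_of_subset_of_nonneg (Finset.subset_univ _) fun j _ _ => ha j
    have hcover : ∀ x : ℝ, 0 ≤ x → x < ∑ j, a j → ∃ i, c i ≤ x ∧ x < c i + a i := by
      intro x hx hxS
      have hci0 : c ⟨0, by omega⟩ = 0 := by
        apply Finset.sum_eq_zero
        intro j hj
        exact absurd (Finset.mem_Iio.mp hj) (by simp [Fin.lt_def])
      have hsne : (Finset.univ.filter (fun i => c i ≤ x)).Nonempty :=
        ⟨⟨0, by omega⟩, Finset.mem_filter.mpr ⟨Finset.mem_univ _, hci0.le.trans hx⟩⟩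
      let i := (Finset.univ.filter (fun i => c i ≤ x)).max' hsne
      have hile : c i ≤ x := (Finset.mem_filter.mp (Finset.max'_mem _ hsne)).2
      refine ⟨i, hile, ?_⟩
      by_contra h
      push_neg at h
      by_cases hlast : i.val + 1 < n
      · have hIio : Finset.Iio (⟨i.val + 1, hlast⟩ : Fin n) = Finset.Iic i := by
          ext y
          simp only [Finset.mem_Iio, Finset.mem_Iic, Fin.lt_def, Fin.le_def]
          omega
        have hcj : c (⟨i.val + 1, hlast⟩ : Fin n) = c i + a i := by
          rw [hcext i]
          exact Finset.sum_congr hIio fun _ _ => rfl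
        have hjs : (⟨i.val + 1, hlast⟩ : Fin n) ∈ Finset.univ.filter (fun i => c i ≤ x) :=
          Finset.mem_filter.mpr ⟨Finset.mem_univ _, by rw [hcj]; exact h⟩
        have hle : (⟨i.val + 1, hlast⟩ : Fin n) ≤ i := Finset.le_max' _ _ hjs
        have hle2 : i.val + 1 ≤ i.val := Fin.le_def.mp hle
        omega
      · have hIic : Finset.Iic i = Finset.univ := by
          ext y
          simp only [Finset.mem_Iic, Finset.mem_univ, iff_true, Fin.le_def]
          omega
        have : c i + a i = ∑ j, a j := by rw [hcext, hIic]
        linarith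
    -- the sets
    set A : Fin n → Set ℝ :=
      fun i => ⋃ m : ℕ, Ico (0:ℝ) t ∩ Ico (c i - m * t) (c i + a i - m * t) with hA
    have hmem : ∀ i x, x ∈ A i ↔
        ((0 ≤ x ∧ x < t) ∧ ∃ m : ℕ, c i ≤ x + m * t ∧ x + m * t < c i + a i) := by
      intro i x
      simp only [hA, mem_iUnion, mem_inter_iff, mem_Ico]
      constructor
      · rintro ⟨m, ⟨h1, h2⟩, h3, h4⟩
        exact ⟨⟨h1, h2⟩, m, by linarith, by linarith⟩
      · rintro ⟨⟨h1, h2⟩, m, h3, h4⟩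
        exact ⟨m, ⟨h1, h2⟩, by linarith, by linarith⟩
    have hAmeas : ∀ i, MeasurableSet (A i) := by
      intro i
      exact MeasurableSet.iUnion fun m => (measurableSet_Ico.inter measurableSet_Ico)
    have hAvol : ∀ i, volume (A i) = ENNReal.ofReal (a i) := by
      intro i
      have key : ∀ m : ℕ,
          volume (Ico (0:ℝ) t ∩ Ico (c i - m * t) (c i + a i - m * t)) =
          volume (Ico ((m:ℝ) * t) (m * t + t) ∩ Ico (c i) (c i + a i)) := by
        intro m
        have heq : Ico (0:ℝ) t ∩ Ico (c i - m * t) (c i + a i - m * t) =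
            (fun x => x + (m:ℝ) * t) ⁻¹' (Ico ((m:ℝ) * t) (m * t + t) ∩ Ico (c i) (c i + a i)) := by
          ext x
          simp only [mem_preimage, mem_inter_iff, mem_Ico]
          constructor
          · rintro ⟨⟨h1, h2⟩, h3, h4⟩
            exact ⟨⟨by linarith, by linarith⟩, by linarith, by linarith⟩
          · rintro ⟨⟨h1, h2⟩, h3, h4⟩
            exact ⟨⟨by linarith, by linarith⟩, by linarith, by linarith⟩
        rw [heq, measure_preimage_add_right]
      have hdisjP : Pairwise (Function.onFun Disjoint
          (fun m : ℕ => Ico (0:ℝ) t ∩ Ico (c i - m * t) (c i + a i - m * t))) := by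
        intro m m' hmm'
        apply Set.disjoint_left.mpr
        rintro x ⟨⟨hx0, hxt⟩, h1, h2⟩ ⟨_, h3, h4⟩
        have hai : a i ≤ t := hmax i
        rcases lt_or_gt_of_ne hmm' with hlt | hlt
        · have : (m:ℝ) + 1 ≤ (m':ℝ) := by exact_mod_cast Nat.succ_le_of_lt hlt
          nlinarith
        · have : (m':ℝ) + 1 ≤ (m:ℝ) := by exact_mod_cast Nat.succ_le_of_lt hlt
          nlinarith
      have hdisjQ : Pairwise (Function.onFun Disjoint
          (fun m : ℕ => Ico ((m:ℝ) * t) ((m:ℝ) * t + t) ∩ Ico (c i) (c i + a i))) := by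
        intro m m' hmm'
        apply Set.disjoint_left.mpr
        rintro x ⟨⟨h1, h2⟩, _⟩ ⟨⟨h3, h4⟩, _⟩
        rcases lt_or_gt_of_ne hmm' with hlt | hlt
        · have : (m:ℝ) + 1 ≤ (m':ℝ) := by exact_mod_cast Nat.succ_le_of_lt hlt
          nlinarith
        · have : (m':ℝ) + 1 ≤ (m:ℝ) := by exact_mod_cast Nat.succ_le_of_lt hlt
          nlinarith
      have hUQ : (⋃ m : ℕ, Ico ((m:ℝ) * t) ((m:ℝ) * t + t) ∩ Ico (c i) (c i + a i)) =
          Ico (c i) (c i + a i) := by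
        ext x
        simp only [mem_iUnion, mem_inter_iff, mem_Ico]
        constructor
        · rintro ⟨m, _, hx⟩; exact hx
        · rintro ⟨hx1, hx2⟩
          have hx0 : 0 ≤ x := le_trans (hc0 i) hx1
          refine ⟨⌊x / t⌋₊, ⟨?_, ?_⟩, hx1, hx2⟩
          · have h1 : (⌊x / t⌋₊ : ℝ) ≤ x / t := Nat.floor_le (div_nonneg hx0 ht.le)
            calc (⌊x / t⌋₊ : ℝ) * t ≤ (x / t) * t := by nlinarith
              _ = x := by field_simp
          · have h2 : x / t < ⌊x / t⌋₊ + 1 := Nat.lt_floor_add_one _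
            have := (div_lt_iff₀ ht).mp h2
            linarith
      calc volume (A i)
          = ∑' m : ℕ, volume (Ico (0:ℝ) t ∩ Ico (c i - m * t) (c i + a i - m * t)) :=
            measure_iUnion hdisjP fun m => measurableSet_Ico.inter measurableSet_Ico
        _ = ∑' m : ℕ, volume (Ico ((m:ℝ) * t) ((m:ℝ) * t + t) ∩ Ico (c i) (c i + a i)) :=
            tsum_congr key
        _ = volume (⋃ m : ℕ, Ico ((m:ℝ) * t) ((m:ℝ) * t + t) ∩ Ico (c i) (c i + a i)) :=
            (measure_iUnion hdisjQ fun m => measurableSet_Ico.inter measurableSet_Ico).symm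
        _ = volume (Ico (c i) (c i + a i)) := by rw [hUQ]
        _ = ENNReal.ofReal (a i) := by rw [Real.volume_Ico]; ring_nf
    have hU : (⋃ i, A i) = Ico (0:ℝ) t := by
      ext x
      simp only [mem_iUnion, mem_Ico]
      constructor
      · rintro ⟨i, hx⟩
        exact ((hmem i x).mp hx).1
      · rintro ⟨hx0, hxt⟩
        obtain ⟨i, h1, h2⟩ := hcover x hx0 (lt_of_lt_of_le hxt hupper)
        exact ⟨i, (hmem i x).mpr ⟨⟨hx0, hxt⟩, 0, by simpa, by simpa⟩⟩
    refine ⟨A, hAmeas, hAvol, by rw [hU, Real.volume_Ico, sub_zero], ?_⟩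
    intro s hs
    apply Set.eq_empty_iff_forall_notMem.mpr
    intro x hx
    rw [Set.mem_iInter₂] at hx
    have hm : ∀ i ∈ s, ∃ m : ℕ, (c i ≤ x + m * t ∧ x + m * t < c i + a i) ∧ m < k - 1 := by
      intro i hi
      obtain ⟨⟨hx0, hxt⟩, m, h1, h2⟩ := (hmem i x).mp (hx i hi)
      refine ⟨m, ⟨h1, h2⟩, ?_⟩
      have : (m:ℝ) * t < ((k:ℝ) - 1) * t := by
        have := hcS i
        nlinarith
      have hmk : (m:ℝ) < (k:ℝ) - 1 := lt_of_mul_lt_mul_right this ht.le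
      have hmk' : (m:ℝ) + 1 < (k:ℝ) := by linarith
      have : m + 1 < k := by exact_mod_cast hmk'
      omega
    choose! f hf using hm
    have hinj : Set.InjOn f s := by
      intro i hi j hj hfe
      by_contra hne
      obtain ⟨⟨hi1, hi2⟩, _⟩ := hf i hi
      obtain ⟨⟨hj1, hj2⟩, _⟩ := hf j hj
      rcases lt_or_gt_of_ne hne with hlt | hlt
      · have := hmono i j hlt
        rw [hfe] at hi2
        linarith
      · have := hmono j i hlt
        rw [hfe] at hi1
        linarith
    have hcard : s.card ≤ (Finset.range (k - 1)).card := by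
      apply Finset.card_le_card_of_injOn f
      · intro i hi
        exact Finset.mem_range.mpr (hf i hi).2
      · exact fun i hi j hj he => hinj hi hj he
    rw [hs, Finset.card_range] at hcard
    omega
end

section
/- Given nonnegative integers a_1,...,a_n, an integer a, and 2 ≤ k ≤ n with max{a_1,...,a_n, ⌈(a_1+...+a_n)/(k-1)⌉} ≤ a ≤ a_1+...+a_n, there exist finite sets A_1,...,A_n with |A_i| = a_i, |A_1 ∪ ... ∪ A_n| = a, and the intersection of any k of the sets empty. -/
/-!
Lay intervals of lengths `a 0, a 1, …` end to end on `[0, ∑ a)` and wrap them around modulo `t`.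
An interval of length at most `t` is mapped injectively, so the sizes are kept; since `t ≤ ∑ a`
every residue is hit; and since the intervals are disjoint and `∑ a ≤ (k - 1) t`, a residue `x`
lies in at most `k - 1` of the wrapped intervals, one for each of its lifts `x, x + t, …` below
`(k - 1) t`.
-/

namespace Nat

lemma injOn_mod_Ico_of_le {t p l : ℕ} (hl : l ≤ t) : Set.InjOn (· % t) (Set.Ico p (p + l)) :=
  (Nat.mod_injOn_Ico p t).mono <| by
    rw [Finset.coe_Ico]; exact Set.Ico_subset_Ico_right (by omega)

lemma image_mod_Iio {t S : ℕ} (ht : 0 < t) (hS : t ≤ S) :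
    (· % t) '' Set.Iio S = Set.Iio t := by
  refine Set.Subset.antisymm ?_ fun x hx => ⟨x, lt_of_lt_of_le hx hS, Nat.mod_eq_of_lt hx⟩
  rintro _ ⟨y, -, rfl⟩
  exact Nat.mod_lt y ht

/-- Pigeonhole on the lifts of a residue: below `m * t` there are only `m` of them. -/
lemma card_le_of_forall_mem_image_mod {ι : Type*} {s : Finset ι} {I : ι → Set ℕ} {m t x : ℕ}
    (hdisj : (s : Set ι).PairwiseDisjoint I) (hI : ∀ i ∈ s, I i ⊆ Set.Iio (m * t))
    (hx : ∀ i ∈ s, x ∈ (· % t) '' I i) : s.card ≤ m := by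
  classical
  have hlift : ∀ i, ∃ y, i ∈ s → y ∈ I i ∧ y % t = x := fun i =>
    if hi : i ∈ s then (hx i hi).imp fun _ hy _ => hy else ⟨0, fun h => absurd h hi⟩
  choose y hy using hlift
  calc s.card ≤ (Finset.range m).card := by
        refine Finset.card_le_card_of_injOn (fun i => y i / t) (fun i hi => ?_)
          fun i hi j hj hij => ?_
        · exact Finset.mem_range.2 <| Nat.div_lt_of_lt_mul <| by
            rw [mul_comm]; exact hI i hi (hy i hi).1
        · have hyij : y i = y j := by
            rw [← Nat.div_add_mod (y i) t, ← Nat.div_add_mod (y j) t, (hy i hi).2, (hy j hj).2]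
            exact congrArg (t * · + x) hij
          exact hdisj.elim_set hi hj (y i) (hy i hi).1 (hyij ▸ (hy j hj).1)
    _ = m := Finset.card_range m

end Nat

def blockStart (a : ℕ → ℕ) (i : ℕ) : ℕ := ∑ j ∈ Finset.range i, a j

def block (a : ℕ → ℕ) (i : ℕ) : Set ℕ := Set.Ico (blockStart a i) (blockStart a (i + 1))

section Blocks

open Function

variable (a : ℕ → ℕ)

lemma blockStart_succ (i : ℕ) : blockStart a (i + 1) = blockStart a i + a i :=
  Finset.sum_range_succ a i

lemma monotone_blockStart : Monotone (blockStart a) :=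
  monotone_nat_of_le_succ fun i => by rw [blockStart_succ]; exact Nat.le_add_right _ _

lemma pairwise_disjoint_block : Pairwise (Disjoint on (block a)) :=
  (monotone_blockStart a).pairwise_disjoint_on_Ico_succ

lemma biUnion_block (n : ℕ) : ⋃ i < n, block a i = Set.Iio (blockStart a n) := by
  induction n with
  | zero => simp [blockStart]
  | succ n ih =>
    rw [Set.biUnion_lt_succ, ih, block, Set.Iio_union_Ico_eq_Iio (monotone_blockStart a n.le_succ)]

lemma block_subset_Iio {i n : ℕ} (h : i < n) : block a i ⊆ Set.Iio (blockStart a n) :=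
  biUnion_block a n ▸ Set.subset_biUnion_of_mem (u := block a) h

lemma ncard_image_mod_block {t i : ℕ} (h : a i ≤ t) : ((· % t) '' block a i).ncard = a i := by
  rw [block, blockStart_succ, (Nat.injOn_mod_Ico_of_le h).ncard_image,
    Set.ncard_Ico_nat]
  omega

end Blocks

theorem stmt6_general (n k : ℕ) (hk : 2 ≤ k)
    (a : Fin n → ℕ) (t : ℕ)
    (hmax : ∀ i, a i ≤ t) (hbar : ∑ j, a j ≤ (k - 1) * t)
    (hupper : t ≤ ∑ j, a j) :
    ∃ A : Fin n → Set ℕ, (∀ i, (A i).Finite) ∧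
      (∀ i, (A i).ncard = a i) ∧
      (⋃ i, A i).ncard = t ∧
      (∀ s : Finset (Fin n), s.card = k → (⋂ i ∈ s, A i) = ∅) := by
  set b : ℕ → ℕ := fun j => if h : j < n then a ⟨j, h⟩ else 0
  have hb (i : Fin n) : b i = a i := dif_pos i.isLt
  have hsum : blockStart b n = ∑ j, a j := by
    simp only [blockStart, ← Fin.sum_univ_eq_sum_range, hb]
  refine ⟨fun i => (· % t) '' block b i, fun i => (Set.finite_Ico _ _).image _,
    fun i => hb i ▸ ncard_image_mod_block b (hb i ▸ hmax i), ?_, fun s hs => ?_⟩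
  · have hunion : ⋃ i : Fin n, (· % t) '' block b i = (· % t) '' Set.Iio (∑ j, a j) := by
      rw [← hsum, ← biUnion_block, Set.image_iUnion₂]
      ext x; simp [Fin.exists_iff]
    rcases t.eq_zero_or_pos with rfl | ht
    · rw [hunion, show ∑ j, a j = 0 by simpa using hbar]
      simp
    · rw [hunion, Nat.image_mod_Iio ht hupper, Set.ncard_Iio_nat]
  · refine Set.eq_empty_of_forall_notMem fun x hx => ?_
    have hcard := Nat.card_le_of_forall_mem_image_mod (m := k - 1)
      (((pairwise_disjoint_block b).comp_of_injective Fin.val_injective).set_pairwise _)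
      (fun i _ => (block_subset_Iio b i.isLt).trans (Set.Iio_subset_Iio (hsum ▸ hbar)))
      (Set.mem_iInter₂.1 hx)
    omega

/-- Given nonnegative integers `a i`, `2 ≤ k ≤ n`, and an integer `t` with
`max {a i} ≤ t`, `∑ a i ≤ (k-1)·t` (i.e. `⌈(∑ a i)/(k-1)⌉ ≤ t`) and `t ≤ ∑ a i`,
there exist finite sets `A i` with `|A i| = a i`, `|⋃ A i| = t`, and every
`k`-fold intersection empty. -/
theorem stmt6 (n k : ℕ) (hn : 2 ≤ n) (hk : 2 ≤ k) (hkn : k ≤ n)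
    (a : Fin n → ℕ) (t : ℕ)
    (hmax : ∀ i, a i ≤ t) (hbar : ∑ j, a j ≤ (k - 1) * t)
    (hupper : t ≤ ∑ j, a j) :
    ∃ A : Fin n → Set ℕ, (∀ i, (A i).Finite) ∧
      (∀ i, (A i).ncard = a i) ∧
      (⋃ i, A i).ncard = t ∧
      (∀ s : Finset (Fin n), s.card = k → (⋂ i ∈ s, A i) = ∅) :=
  stmt6_general n k hk a t hmax hbar hupper
end

section
/- Let A_1,...,A_n be finite sets such that every intersection of k distinct sets is empty, and suppose |A_1 ∪ ... ∪ A_n| = (|A_1|+...+|A_n|)/(k-1) (the minimum possible). Then every pure intersection B_S with 1 ≤ |S| ≤ k-2 is empty; i.e., every element of the union lies in exactly k-1 of the sets A_i. -/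
open scoped Classical

/-- If every `k`-fold intersection of the finite sets `A i` is empty (`3 ≤ k ≤ n`) and the
union attains the minimum possible size, `(k-1)·|⋃ A i| = ∑ |A i|`, then every pure
intersection `B S` with `1 ≤ |S| ≤ k - 2` is empty; equivalently, every element of the
union lies in exactly `k - 1` of the sets. -/
theorem stmt10 (n k : ℕ) (hk : 3 ≤ k) (hkn : k ≤ n) (A : Fin n → Set ℕ)
    (hfin : ∀ i, (A i).Finite)
    (hempty : ∀ s : Finset (Fin n), s.card = k → (⋂ i ∈ s, A i) = ∅)
    (hmin : (k - 1) * (⋃ i, A i).ncard = ∑ i, (A i).ncard)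
    (B : Finset (Fin n) → Set ℕ)
    (hB : ∀ S, B S = (⋂ i ∈ S, A i) \ (⋃ j ∈ (Finset.univ \ S), A j)) :
    (∀ S : Finset (Fin n), 1 ≤ S.card → S.card ≤ k - 2 → B S = ∅) ∧
    (∀ x ∈ ⋃ i, A i, (Finset.univ.filter (fun i => x ∈ A i)).card = k - 1) := by
  set a : Fin n → Finset ℕ := fun i => (hfin i).toFinset with ha
  have hmem : ∀ i x, x ∈ a i ↔ x ∈ A i := by
    intro i x; simp [ha]
  set U : Finset ℕ := Finset.univ.biUnion a with hUdef
  have hUset : (⋃ i, A i) = ↑U := by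
    ext x; simp [hUdef, hmem]
  -- m x := number of sets containing x
  have hle : ∀ x, (Finset.univ.filter (fun i => x ∈ A i)).card ≤ k - 1 := by
    intro x
    by_contra h
    push_neg at h
    have hk' : k ≤ (Finset.univ.filter (fun i => x ∈ A i)).card := by omega
    obtain ⟨s, hs, hcard⟩ := Finset.exists_subset_card_eq hk'
    have := hempty s hcard
    have hx : x ∈ ⋂ i ∈ s, A i := by
      simp only [Set.mem_iInter]
      intro i hi
      have := hs hi
      simpa using (Finset.mem_filter.mp this).2
    rw [this] at hx
    exact hx
  -- double counting
  have hsum : ∑ x ∈ U, (Finset.univ.filter (fun i => x ∈ A i)).card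
      = ∑ i, (A i).ncard := by
    have h1 : ∀ i : Fin n, (A i).ncard = (a i).card := by
      intro i
      rw [show (A i) = ↑(a i) by ext x; simp [hmem]]
      exact Set.ncard_coe_finset _
    simp only [h1]
    have h2 : ∀ i : Fin n, (a i).card = ∑ x ∈ U, if x ∈ A i then 1 else 0 := by
      intro i
      rw [← Finset.card_filter]
      congr 1
      ext x
      simp only [Finset.mem_filter, hUdef, Finset.mem_biUnion, hmem]
      constructor
      · exact fun hx => ⟨⟨i, Finset.mem_univ i, hx⟩, hx⟩
      · exact fun hx => hx.2
    simp only [h2]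
    rw [Finset.sum_comm]
    congr 1
    ext x
    rw [Finset.card_filter]
  have hU' : (⋃ i, A i).ncard = U.card := by rw [hUset, Set.ncard_coe_finset]
  have hkey : ∀ x ∈ U, (Finset.univ.filter (fun i => x ∈ A i)).card = k - 1 := by
    have heq : ∑ x ∈ U, (Finset.univ.filter (fun i => x ∈ A i)).card
        = ∑ _x ∈ U, (k - 1) := by
      rw [hsum, ← hmin, hU', Finset.sum_const, smul_eq_mul, mul_comm]
    exact fun x hx =>
      (Finset.sum_eq_sum_iff_of_le (fun x _ => hle x)).mp heq x hx
  constructor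
  · intro S hS1 hS2
    rw [hB]
    ext x
    simp only [Set.mem_diff, Set.mem_iInter, Set.mem_iUnion, exists_prop,
      Set.mem_empty_iff_false, iff_false, not_and, not_not]
    intro hin
    by_contra hnot
    push_neg at hnot
    have hfil : Finset.univ.filter (fun i => x ∈ A i) = S := by
      ext i
      simp only [Finset.mem_filter, Finset.mem_univ, true_and]
      constructor
      · intro hxi
        by_contra hiS
        exact hnot i (by simp [Finset.mem_sdiff, hiS]) hxi
      · exact fun hi => hin i hi
    obtain ⟨i, hi⟩ := Finset.card_pos.mp (by omega : 0 < S.card)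
    have hxU : x ∈ U := by
      simp only [hUdef, Finset.mem_biUnion, hmem]
      exact ⟨i, Finset.mem_univ i, hin i hi⟩
    have := hkey x hxU
    rw [hfil] at this
    omega
  · intro x hx
    apply hkey
    rw [hUset] at hx
    exact hx
end

section
/- Suppose nonnegative reals a_1,...,a_n and 3 ≤ k ≤ n satisfy σ/(k-2) ≥ a ≥ σ/(k-1) ≥ max{a_1,...,a_n}, where σ = a_1+...+a_n. Then there exist Lebesgue measurable sets A_1,...,A_n with μ(A_i)=a_i, μ(∪A_i)=a, such that every point of the union belongs to exactly k-1 or exactly k-2 of the sets. -/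
open scoped Classical

open MeasureTheory

private lemma exists_index (b : ℕ → ℝ) (n : ℕ) (x : ℝ) (h0 : b 0 ≤ x) (hn : x < b n) :
    ∃ i < n, b i ≤ x ∧ x < b (i + 1) := by
  induction n with
  | zero => exact absurd hn (not_lt.2 h0)
  | succ n ih =>
    by_cases h : b n ≤ x
    · exact ⟨n, Nat.lt_succ_self n, h, hn⟩
    · obtain ⟨i, hi, hb1, hb2⟩ := ih (lt_of_not_ge h)
      exact ⟨i, hi.trans (Nat.lt_succ_self n), hb1, hb2⟩

private def auxb (n : ℕ) (a : Fin n → ℝ) : ℕ → ℝ :=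
  fun i => ∑ j ∈ Finset.range i, if h : j < n then a ⟨j, h⟩ else 0

private def auxA (n : ℕ) (a : Fin n → ℝ) (t : ℝ) : Fin n → Set ℝ := fun i =>
  Set.Ico (auxb n a i - ⌊auxb n a i / t⌋₊ * t)
      (min t (auxb n a ((i : ℕ) + 1) - ⌊auxb n a i / t⌋₊ * t)) ∪
    Set.Ico 0 (auxb n a ((i : ℕ) + 1) - (⌊auxb n a i / t⌋₊ + 1) * t)

set_option maxHeartbeats 1000000 in
private lemma stmt11_main (n k : ℕ) (hk : 3 ≤ k)
    (a : Fin n → ℝ) (ha : ∀ i, 0 ≤ a i) (t : ℝ) (ht : 0 < t)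
    (hs1 : ((k : ℝ) - 2) * t ≤ ∑ j, a j) (hs2 : (∑ j, a j) ≤ ((k : ℝ) - 1) * t)
    (hat : ∀ i, a i ≤ t) :
    ∃ A : Fin n → Set ℝ, (∀ i, MeasurableSet (A i)) ∧
      (∀ i, volume (A i) = ENNReal.ofReal (a i)) ∧
      volume (⋃ i, A i) = ENNReal.ofReal t ∧
      (∀ x ∈ ⋃ i, A i,
        (Finset.univ.filter (fun i => x ∈ A i)).card = k - 1 ∨
        (Finset.univ.filter (fun i => x ∈ A i)).card = k - 2) := by
  have hk3 : (3 : ℝ) ≤ (k : ℝ) := by exact_mod_cast hk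
  set b := auxb n a with hbdef
  set A := auxA n a t with hAdef
  set m : ℕ → ℕ := fun i => ⌊b i / t⌋₊ with hmdef
  have hb0 : b 0 = 0 := by simp [hbdef, auxb]
  have hbs : ∀ i, b (i + 1) = b i + (if h : i < n then a ⟨i, h⟩ else 0) := by
    intro i; simp [hbdef, auxb, Finset.sum_range_succ]
  have ha' : ∀ i, 0 ≤ (if h : i < n then a ⟨i, h⟩ else 0) := by
    intro i; split
    · exact ha _
    · exact le_rfl
  have hat' : ∀ i, (if h : i < n then a ⟨i, h⟩ else 0) ≤ t := by
    intro i; split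
    · exact hat _
    · exact ht.le
  have hbmono : Monotone b := by
    intro i j hij
    exact Finset.sum_le_sum_of_subset_of_nonneg (Finset.range_subset_range.2 hij)
      (fun i _ _ => ha' i)
  have hbnn : ∀ i, 0 ≤ b i := fun i => hb0 ▸ hbmono (Nat.zero_le i)
  have hbn : b n = ∑ j, a j := by
    rw [hbdef, auxb, ← Fin.sum_univ_eq_sum_range]
    exact Finset.sum_congr rfl fun j _ => by simp [j.isLt]
  have hm1 : ∀ i, (m i : ℝ) * t ≤ b i := by
    intro i
    have := Nat.floor_le (div_nonneg (hbnn i) ht.le)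
    calc (m i : ℝ) * t ≤ (b i / t) * t := mul_le_mul_of_nonneg_right this ht.le
      _ = b i := by field_simp
  have hm2 : ∀ i, b i < ((m i : ℝ) + 1) * t := by
    intro i
    have h := Nat.lt_floor_add_one (b i / t)
    calc b i = (b i / t) * t := by field_simp
      _ < ((m i : ℝ) + 1) * t := mul_lt_mul_of_pos_right (by exact_mod_cast h) ht
  have hup : ∀ i, b (i + 1) ≤ b i + t := by
    intro i; have := hbs i; have := hat' i; linarith
  have hbai : ∀ i : Fin n, b ((i : ℕ) + 1) = b (i : ℕ) + a i := by
    intro i; rw [hbs]; congr 1; simp [i.isLt]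
  -- membership characterization
  have hmem : ∀ (i : Fin n) (x : ℝ), x ∈ A i ↔
      (0 ≤ x ∧ x < t ∧ ∃ mm : ℕ, b i ≤ x + mm * t ∧ x + mm * t < b ((i : ℕ) + 1)) := by
    intro i x
    have hAi : A i = Set.Ico (b (i : ℕ) - m (i : ℕ) * t)
        (min t (b ((i : ℕ) + 1) - m (i : ℕ) * t)) ∪
        Set.Ico 0 (b ((i : ℕ) + 1) - ((m (i : ℕ) : ℝ) + 1) * t) := rfl
    rw [hAi]
    constructor
    · rintro (⟨hx1, hx2⟩ | ⟨hx1, hx2⟩)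
      · have hx0 : 0 ≤ x := le_trans (by linarith [hm1 (i : ℕ)]) hx1
        have hxt : x < t := lt_of_lt_of_le hx2 (min_le_left _ _)
        have := lt_of_lt_of_le hx2 (min_le_right _ _)
        exact ⟨hx0, hxt, m (i : ℕ), by linarith, by linarith⟩
      · refine ⟨hx1, ?_, m (i : ℕ) + 1, ?_, ?_⟩
        · have := hup (i : ℕ); have := hm2 (i : ℕ); linarith
        · have := hm2 (i : ℕ); push_cast; linarith
        · push_cast; linarith
    · rintro ⟨hx0, hxt, mm, hmm1, hmm2⟩
      have hge : m (i : ℕ) ≤ mm := by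
        by_contra h
        push_neg at h
        have h' : (mm : ℝ) + 1 ≤ m (i : ℕ) := by exact_mod_cast h
        have hp := mul_le_mul_of_nonneg_right h' ht.le
        have := hm1 (i : ℕ); nlinarith
      have hle : mm ≤ m (i : ℕ) + 1 := by
        by_contra h
        push_neg at h
        have h' : (m (i : ℕ) : ℝ) + 2 ≤ mm := by exact_mod_cast h
        have hp := mul_le_mul_of_nonneg_right h' ht.le
        have := hm2 (i : ℕ); have := hup (i : ℕ); nlinarith
      have : mm = m (i : ℕ) ∨ mm = m (i : ℕ) + 1 := by omega
      rcases this with h | h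
      · subst h
        exact Or.inl ⟨by linarith, lt_min (by linarith) (by linarith)⟩
      · subst h
        refine Or.inr ⟨hx0, ?_⟩
        push_cast at hmm2; linarith
  -- index uniqueness
  have hidx : ∀ (i1 i2 : ℕ) (y : ℝ), b i1 ≤ y → y < b (i1 + 1) → b i2 ≤ y → y < b (i2 + 1) →
      i1 = i2 := by
    intro i1 i2 y h1 h2 h3 h4
    rcases lt_trichotomy i1 i2 with h | h | h
    · exact absurd (lt_of_lt_of_le h2 ((hbmono h).trans h3)) (lt_irrefl y)
    · exact h
    · exact absurd (lt_of_lt_of_le h4 ((hbmono h).trans h1)) (lt_irrefl y)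
  refine ⟨A, ?_, ?_, ?_, ?_⟩
  · intro i
    exact (measurableSet_Ico.union measurableSet_Ico)
  · -- volumes
    intro i
    have hdisj : Disjoint
        (Set.Ico (b (i : ℕ) - m (i : ℕ) * t) (min t (b ((i : ℕ) + 1) - m (i : ℕ) * t)))
        (Set.Ico (0 : ℝ) (b ((i : ℕ) + 1) - (m (i : ℕ) + 1) * t)) := by
      rw [Set.Ico_disjoint_Ico]
      refine le_trans (min_le_right _ _) (le_trans ?_ (le_max_left _ _))
      have := hup (i : ℕ); push_cast; linarith
    have hA : A i = Set.Ico (b (i : ℕ) - m (i : ℕ) * t)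
        (min t (b ((i : ℕ) + 1) - m (i : ℕ) * t)) ∪
        Set.Ico 0 (b ((i : ℕ) + 1) - ((m (i : ℕ) : ℝ) + 1) * t) := rfl
    rw [hA, measure_union hdisj measurableSet_Ico, Real.volume_Ico, Real.volume_Ico]
    have hba := hbai i
    rcases le_or_gt (b ((i : ℕ) + 1)) (((m (i : ℕ) : ℝ) + 1) * t) with h | h
    · rw [min_eq_right (by push_cast; linarith [hm1 (i : ℕ)])]
      have h2 : ENNReal.ofReal (b ((i : ℕ) + 1) - ((m (i : ℕ) : ℝ) + 1) * t - 0) = 0 :=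
        ENNReal.ofReal_eq_zero.2 (by linarith)
      rw [h2, add_zero]
      congr 1; linarith
    · rw [min_eq_left (by push_cast; linarith)]
      rw [← ENNReal.ofReal_add (by linarith [hm2 (i : ℕ)]) (by push_cast; linarith)]
      congr 1; push_cast; linarith
  · -- union
    have hU : (⋃ i, A i) = Set.Ico 0 t := by
      ext x
      simp only [Set.mem_iUnion, Set.mem_Ico]
      constructor
      · rintro ⟨i, hx⟩
        rw [hmem] at hx
        exact ⟨hx.1, hx.2.1⟩
      · rintro ⟨hx0, hxt⟩
        have htn : t ≤ b n := by
          rw [hbn]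
          nlinarith
        have hxn : x < b n := lt_of_lt_of_le hxt htn
        obtain ⟨i, hi, hy1, hy2⟩ := exists_index b n x (hb0 ▸ hx0) hxn
        refine ⟨⟨i, hi⟩, (hmem ⟨i, hi⟩ x).2 ⟨hx0, hxt, 0, ?_, ?_⟩⟩
        · simpa using hy1
        · simpa using hy2
    rw [hU, Real.volume_Ico, sub_zero]
  · -- counting
    intro x hx
    have hx' : x ∈ Set.Ico (0:ℝ) t := by
      obtain ⟨_, ⟨i, rfl⟩, hxi⟩ := hx
      rw [hmem] at hxi
      exact ⟨hxi.1, hxi.2.1⟩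
    obtain ⟨hx0, hxt⟩ := hx'
    set T := (Finset.range k).filter (fun mm : ℕ => x + (mm : ℝ) * t < b n) with hTdef
    have hex : ∀ i : Fin n, x ∈ A i →
        ∃ mm : ℕ, b (i : ℕ) ≤ x + mm * t ∧ x + mm * t < b ((i : ℕ) + 1) :=
      fun i h => ((hmem i x).1 h).2.2
    choose f hf1 hf2 using hex
    have hcard : (Finset.univ.filter (fun i => x ∈ A i)).card = T.card := by
      apply Finset.card_bij (fun i hi => f i (Finset.mem_filter.1 hi).2)
      · intro i hi
        have hxi := (Finset.mem_filter.1 hi).2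
        have h1 : b ((i : ℕ) + 1) ≤ b n := hbmono i.isLt
        have h2 := hf2 i hxi
        have h3 := hf1 i hxi
        refine Finset.mem_filter.2 ⟨Finset.mem_range.2 ?_, by linarith⟩
        have hlt : (f i hxi : ℝ) * t < (k : ℝ) * t := by
          rw [hbn] at h1
          nlinarith
        have : (f i hxi : ℝ) < (k : ℝ) := lt_of_mul_lt_mul_right hlt ht.le
        exact_mod_cast this
      · intro i1 hi1 i2 hi2 heq
        have hxi1 := (Finset.mem_filter.1 hi1).2
        have hxi2 := (Finset.mem_filter.1 hi2).2
        have e1 := hf1 i1 hxi1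
        have e2 := hf2 i1 hxi1
        have e3 := hf1 i2 hxi2
        have e4 := hf2 i2 hxi2
        rw [heq] at e1 e2
        exact Fin.ext (hidx _ _ _ e1 e2 e3 e4)
      · intro mm hmm
        obtain ⟨hmk, hms⟩ := Finset.mem_filter.1 hmm
        have hy0 : b 0 ≤ x + (mm : ℝ) * t := by
          rw [hb0]; positivity
        obtain ⟨i, hi, hy1, hy2⟩ := exists_index b n _ hy0 hms
        have hxA : x ∈ A ⟨i, hi⟩ := (hmem ⟨i, hi⟩ x).2 ⟨hx0, hxt, mm, hy1, hy2⟩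
        refine ⟨⟨i, hi⟩, Finset.mem_filter.2 ⟨Finset.mem_univ _, hxA⟩, ?_⟩
        have h1 := hf1 ⟨i, hi⟩ hxA
        have h2 := hf2 ⟨i, hi⟩ hxA
        set mm' := f ⟨i, hi⟩ hxA with hmm'
        have hupi := hup i
        rcases lt_trichotomy mm' mm with h | h | h
        · exfalso
          have h' : (mm' : ℝ) + 1 ≤ mm := by exact_mod_cast h
          have hp := mul_le_mul_of_nonneg_right h' ht.le
          simp only [Fin.val_mk] at h1 h2 hy1 hy2
          nlinarith
        · exact h
        · exfalso
          have h' : (mm : ℝ) + 1 ≤ mm' := by exact_mod_cast h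
          have hp := mul_le_mul_of_nonneg_right h' ht.le
          simp only [Fin.val_mk] at h1 h2 hy1 hy2
          nlinarith
    rw [hcard]
    have hck1 : ((k - 1 : ℕ) : ℝ) = (k : ℝ) - 1 := by
      rw [Nat.cast_sub (by omega)]; norm_num
    have hck2 : ((k - 2 : ℕ) : ℝ) = (k : ℝ) - 2 := by
      rw [Nat.cast_sub (by omega)]; norm_num
    rcases le_or_gt (∑ j, a j) (((k : ℝ) - 2) * t + x) with hcase | hcase
    · right
      have : T = Finset.range (k - 2) := by
        ext mm
        simp only [hTdef, Finset.mem_filter, Finset.mem_range, hbn]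
        constructor
        · rintro ⟨hm1', hm2'⟩
          have hlt : (mm : ℝ) * t < ((k : ℝ) - 2) * t := by linarith
          have : (mm : ℝ) < (k : ℝ) - 2 := lt_of_mul_lt_mul_right hlt ht.le
          rw [← hck2] at this
          exact_mod_cast this
        · intro h
          refine ⟨by omega, ?_⟩
          have hm3 : (mm : ℝ) ≤ (k : ℝ) - 3 := by
            have : (mm : ℝ) + 3 ≤ (k : ℝ) := by exact_mod_cast (by omega : mm + 3 ≤ k)
            linarith
          have := mul_le_mul_of_nonneg_right hm3 ht.le
          nlinarith
      rw [this, Finset.card_range]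
    · left
      have : T = Finset.range (k - 1) := by
        ext mm
        simp only [hTdef, Finset.mem_filter, Finset.mem_range, hbn]
        constructor
        · rintro ⟨hm1', hm2'⟩
          have hlt : (mm : ℝ) * t < ((k : ℝ) - 1) * t := by linarith
          have : (mm : ℝ) < (k : ℝ) - 1 := lt_of_mul_lt_mul_right hlt ht.le
          rw [← hck1] at this
          exact_mod_cast this
        · intro h
          refine ⟨by omega, ?_⟩
          have hm3 : (mm : ℝ) ≤ (k : ℝ) - 2 := by
            have : (mm : ℝ) + 2 ≤ (k : ℝ) := by exact_mod_cast (by omega : mm + 2 ≤ k)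
            linarith
          have := mul_le_mul_of_nonneg_right hm3 ht.le
          nlinarith
      rw [this, Finset.card_range]

/-- If nonnegative reals `a i` and `3 ≤ k ≤ n` satisfy
`σ/(k-2) ≥ a ≥ σ/(k-1) ≥ max a i` with `σ = ∑ a i`, then there exist measurable
`A i ⊆ ℝ` with `μ(A i) = a i`, `μ(⋃ A i) = a`, and every point of the union belonging to
exactly `k-1` or exactly `k-2` of the sets. -/
theorem stmt11 (n k : ℕ) (hn : 3 ≤ n) (hk : 3 ≤ k) (hkn : k ≤ n)
    (a : Fin n → ℝ) (ha : ∀ i, 0 ≤ a i) (t : ℝ)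
    (h1 : t ≤ (∑ j, a j) / (k - 2)) (h2 : (∑ j, a j) / (k - 1) ≤ t)
    (h3 : ∀ i, a i ≤ (∑ j, a j) / (k - 1)) :
    ∃ A : Fin n → Set ℝ, (∀ i, MeasurableSet (A i)) ∧
      (∀ i, volume (A i) = ENNReal.ofReal (a i)) ∧
      volume (⋃ i, A i) = ENNReal.ofReal t ∧
      (∀ x ∈ ⋃ i, A i,
        (Finset.univ.filter (fun i => x ∈ A i)).card = k - 1 ∨
        (Finset.univ.filter (fun i => x ∈ A i)).card = k - 2) := by
  have hS0 : 0 ≤ ∑ j, a j := Finset.sum_nonneg fun i _ => ha i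
  have hk3 : (3 : ℝ) ≤ (k : ℝ) := by exact_mod_cast hk
  have hk2 : (0 : ℝ) < (k : ℝ) - 2 := by linarith
  have hk1 : (0 : ℝ) < (k : ℝ) - 1 := by linarith
  rcases eq_or_lt_of_le hS0 with h0 | h0
  · have ht0 : t = 0 := by
      rw [← h0, zero_div] at h1 h2
      linarith
    have hai : ∀ i, a i = 0 := by
      intro i
      have := h3 i
      rw [← h0, zero_div] at this
      exact le_antisymm this (ha i)
    refine ⟨fun _ => ∅, fun _ => MeasurableSet.empty, ?_, ?_, ?_⟩
    · intro i; simp [hai i]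
    · simp [ht0]
    · simp
  · have ht : 0 < t := lt_of_lt_of_le (div_pos h0 hk1) h2
    apply stmt11_main n k hk a ha t ht
    · rw [mul_comm]; exact (le_div_iff₀ hk2).1 h1
    · rw [mul_comm]; exact (div_le_iff₀ hk1).1 h2
    · exact fun i => (h3 i).trans h2
end

section
/- If finite sets A_1,...,A_n with |A_i| = a_i realize a union of size a and a+1 ≤ a_1+...+a_n, with every intersection of k of the sets empty, then there exist finite sets A'_1,...,A'_n with |A'_i| = a_i, |A'_1 ∪ ... ∪ A'_n| = a+1, and every intersection of k of them empty. -/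
/-!
Since `|⋃ A i| < ∑ |A i|`, some point `x` lies in two of the sets, say `A i` and `A j`. Replacing
`x` in `A j` by a point `y` outside the union keeps every size, adds `y` to the union without
losing `x` (still in `A i`), and cannot create a `k`-fold intersection: `y` lies only in the new
`A j`, while every other point lies in no more sets than before.
-/

open Function

namespace Set

variable {ι α : Type*}

theorem exists_ne_mem_mem_of_ncard_iUnion_lt_sum [Fintype ι] {A : ι → Set α}
    (hA : ∀ i, (A i).Finite) (h : (⋃ i, A i).ncard < ∑ i, (A i).ncard) :
    ∃ i j, i ≠ j ∧ ∃ x, x ∈ A i ∧ x ∈ A j := by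
  by_contra! hdisj
  have hpair : Pairwise (Disjoint on A) := fun i j hij =>
    disjoint_left.2 fun x hxi hxj => hdisj i j hij x hxi hxj
  rw [ncard_iUnion_of_finite hA hpair, finsum_eq_sum_of_fintype] at h
  exact h.false

variable [DecidableEq ι]

def exchange (A : ι → Set α) (j : ι) (x y : α) : ι → Set α :=
  update A j (insert y (A j \ {x}))

variable {A : ι → Set α} {j : ι} {x y : α}

@[simp]
theorem exchange_self : exchange A j x y j = insert y (A j \ {x}) :=
  update_self _ _ _

theorem exchange_of_ne {m : ι} (hm : m ≠ j) : exchange A j x y m = A m :=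
  update_of_ne hm _ _

theorem exchange_subset_insert (m : ι) : exchange A j x y m ⊆ insert y (A m) := by
  obtain rfl | hm := eq_or_ne m j
  · rw [exchange_self]
    exact insert_subset_insert sdiff_subset
  · rw [exchange_of_ne hm]
    exact subset_insert _ _

theorem finite_exchange (hA : ∀ m, (A m).Finite) (m : ι) : (exchange A j x y m).Finite :=
  ((hA m).insert y).subset (exchange_subset_insert m)

theorem ncard_exchange_apply (hx : x ∈ A j) (hy : y ∉ A j) (m : ι) :
    (exchange A j x y m).ncard = (A m).ncard := by
  obtain rfl | hm := eq_or_ne m j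
  · rw [exchange_self, ncard_exchange hy hx]
  · rw [exchange_of_ne hm]

theorem iUnion_exchange {i : ι} (hij : i ≠ j) (hxi : x ∈ A i) :
    ⋃ m, exchange A j x y m = insert y (⋃ m, A m) := by
  refine (iUnion_subset fun m => (exchange_subset_insert m).trans
    (insert_subset_insert (subset_iUnion A m))).antisymm (insert_subset ?_ ?_)
  · exact mem_iUnion.2 ⟨j, by simp⟩
  · refine iUnion_subset fun m z hz => ?_
    obtain rfl | hm := eq_or_ne m j
    · obtain rfl | hzx := eq_or_ne z x
      · exact mem_iUnion.2 ⟨i, by rwa [exchange_of_ne hij]⟩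
      · exact mem_iUnion.2 ⟨m, by simp [hz, hzx]⟩
    · exact mem_iUnion.2 ⟨m, by rwa [exchange_of_ne hm]⟩

theorem biInter_exchange_subset (hy : ∀ m, y ∉ A m) {s : Finset ι} (hs : 1 < s.card) :
    ⋂ m ∈ s, exchange A j x y m ⊆ ⋂ m ∈ s, A m := by
  intro z hz
  rw [mem_iInter₂] at hz ⊢
  obtain ⟨i, his, hij⟩ := (Finset.one_lt_card_iff_nontrivial.1 hs).exists_ne j
  have hzy : z ≠ y := by
    rintro rfl
    have hzi := hz i his
    rw [exchange_of_ne hij] at hzi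
    exact hy i hzi
  exact fun m hm => (mem_insert_iff.1 (exchange_subset_insert m (hz m hm))).resolve_left hzy

end Set

open Set

theorem stmt13_general (n k : ℕ) (hk : 2 ≤ k)
    (A : Fin n → Set ℕ) (hfin : ∀ i, (A i).Finite)
    (hempty : ∀ s : Finset (Fin n), s.card = k → (⋂ i ∈ s, A i) = ∅)
    (hlt : (⋃ i, A i).ncard + 1 ≤ ∑ i, (A i).ncard) :
    ∃ A' : Fin n → Set ℕ, (∀ i, (A' i).Finite) ∧
      (∀ i, (A' i).ncard = (A i).ncard) ∧
      (⋃ i, A' i).ncard = (⋃ i, A i).ncard + 1 ∧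
      (∀ s : Finset (Fin n), s.card = k → (⋂ i ∈ s, A' i) = ∅) := by
  have hUfin : (⋃ i, A i).Finite := finite_iUnion hfin
  obtain ⟨i, j, hij, x, hxi, hxj⟩ := exists_ne_mem_mem_of_ncard_iUnion_lt_sum hfin hlt
  obtain ⟨y, hyU⟩ := hUfin.infinite_compl.nonempty
  have hy : ∀ m, y ∉ A m := fun m hm => hyU (mem_iUnion.2 ⟨m, hm⟩)
  refine ⟨exchange A j x y, finite_exchange hfin, ncard_exchange_apply hxj (hy j), ?_, ?_⟩
  · rw [iUnion_exchange hij hxi, ncard_insert_of_notMem hyU hUfin]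
  · intro s hs
    exact subset_empty_iff.1 (hempty s hs ▸ biInter_exchange_subset hy (by omega))

/-- If finite sets `A i` have every `k`-fold intersection empty and
`|⋃ A i| + 1 ≤ ∑ |A i|`, then there are finite sets `A' i` with `|A' i| = |A i|`,
`|⋃ A' i| = |⋃ A i| + 1`, and every `k`-fold intersection empty. -/
theorem stmt13 (n k : ℕ) (hn : 2 ≤ n) (hk : 2 ≤ k) (hkn : k ≤ n)
    (A : Fin n → Set ℕ) (hfin : ∀ i, (A i).Finite)
    (hempty : ∀ s : Finset (Fin n), s.card = k → (⋂ i ∈ s, A i) = ∅)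
    (hlt : (⋃ i, A i).ncard + 1 ≤ ∑ i, (A i).ncard) :
    ∃ A' : Fin n → Set ℕ, (∀ i, (A' i).Finite) ∧
      (∀ i, (A' i).ncard = (A i).ncard) ∧
      (⋃ i, A' i).ncard = (⋃ i, A i).ncard + 1 ∧
      (∀ s : Finset (Fin n), s.card = k → (⋂ i ∈ s, A' i) = ∅) :=
  stmt13_general n k hk A hfin hempty hlt
end

section
/- Given nonnegative reals a_1,...,a_n (n ≥ 2) and any real a with max{a_1,...,a_n} ≤ a ≤ a_1+...+a_n, there exist Lebesgue measurable subsets A_1,...,A_n of ℝ with μ(A_i) = a_i for all i and μ(A_1 ∪ ... ∪ A_n) = a (Fréchet's realization, i.e., the case without intersection constraints). -/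
open MeasureTheory

/-- Fréchet's realization: given nonnegative reals `a i` (`n ≥ 2`) and a real `a` with
`max a i ≤ a ≤ ∑ a i`, there exist measurable `A i ⊆ ℝ` with `μ(A i) = a i` and
`μ(⋃ A i) = a`. -/
theorem stmt17 (n : ℕ) (hn : 2 ≤ n) (a : Fin n → ℝ) (ha : ∀ i, 0 ≤ a i)
    (t : ℝ) (hmax : ∀ i, a i ≤ t) (hupper : t ≤ ∑ j, a j) :
    ∃ A : Fin n → Set ℝ, (∀ i, MeasurableSet (A i)) ∧
      (∀ i, volume (A i) = ENNReal.ofReal (a i)) ∧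
      volume (⋃ i, A i) = ENNReal.ofReal t := by
  have hnpos : 0 < n := by omega
  have ht : 0 ≤ t := le_trans (ha ⟨0, hnpos⟩) (hmax ⟨0, hnpos⟩)
  set b : ℕ → ℝ := fun k => if h : k < n then a ⟨k, h⟩ else 0 with hb
  set S : ℕ → ℝ := fun k => ∑ j ∈ Finset.range k, b j with hS
  set x : ℕ → ℝ := fun k => min (S k) (t - b k) with hx
  have hba : ∀ i : Fin n, b i.val = a i := fun i => dif_pos i.isLt
  have hb0 : ∀ k, 0 ≤ b k := by
    intro k
    by_cases h : k < n
    · simpa [hb, h] using ha ⟨k, h⟩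
    · simp [hb, h]
  have hbt : ∀ k, b k ≤ t := by
    intro k
    by_cases h : k < n
    · simpa [hb, h] using hmax ⟨k, h⟩
    · simpa [hb, h] using ht
  have hS0 : ∀ k, 0 ≤ S k := fun k => Finset.sum_nonneg fun j _ => hb0 j
  have hSsucc : ∀ k, S (k + 1) = S k + b k := fun k => Finset.sum_range_succ b k
  have hSn : S n = ∑ j, a j := by
    show ∑ j ∈ Finset.range n, b j = ∑ j, a j
    rw [← Fin.sum_univ_eq_sum_range]
    exact Finset.sum_congr rfl fun i _ => hba i
  have hx0 : ∀ k, 0 ≤ x k := fun k => le_min (hS0 k) (by linarith [hbt k])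
  have hxt : ∀ k, x k + b k ≤ t := fun k => by
    have := min_le_right (S k) (t - b k); simp only [hx]; linarith
  refine ⟨fun i => Set.Icc (x i.val) (x i.val + a i), fun i => measurableSet_Icc, ?_, ?_⟩
  · intro i
    rw [Real.volume_Icc, add_sub_cancel_left]
  · have hunion : (⋃ i, Set.Icc (x i.val) (x i.val + a i)) = Set.Icc 0 t := by
      apply Set.Subset.antisymm
      · refine Set.iUnion_subset fun i => Set.Icc_subset_Icc (hx0 i.val) ?_
        have := hxt i.val; rwa [hba i] at this
      · intro y hy
        obtain ⟨hy0, hyt⟩ := hy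
        set T : Finset ℕ := (Finset.range n).filter (fun k => x k ≤ y) with hT
        have h0T : 0 ∈ T := by
          have hx00 : x 0 = 0 := by
            simp only [hx, hS, Finset.range_zero, Finset.sum_empty]
            exact min_eq_left (by linarith [hbt 0])
          simp [hT, Finset.mem_filter, Finset.mem_range, hx00, hnpos, hy0]
        have hTne : T.Nonempty := ⟨0, h0T⟩
        set k := T.max' hTne with hk
        have hkT : k ∈ T := T.max'_mem hTne
        have hkn : k < n := (Finset.mem_range.mp (Finset.mem_filter.mp hkT).1)
        have hxky : x k ≤ y := (Finset.mem_filter.mp hkT).2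
        have hykb : y ≤ x k + b k := by
          have hxkb : x k + b k = min (S k + b k) t := by
            simp only [hx]
            rw [← min_add_add_right]
            congr 1
            ring
          by_cases hlast : k + 1 = n
          · rw [hxkb, ← hSsucc, hlast, hSn]
            rw [min_eq_right hupper]
            exact hyt
          · have hk1n : k + 1 < n := by omega
            have hk1T : k + 1 ∉ T := by
              intro hmem
              have := T.le_max' (k + 1) hmem
              omega
            have : ¬ x (k + 1) ≤ y := by
              intro h
              exact hk1T (Finset.mem_filter.mpr ⟨Finset.mem_range.mpr hk1n, h⟩)
            have hylt : y < x (k + 1) := lt_of_not_ge this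
            have : y < S (k + 1) := lt_of_lt_of_le hylt (min_le_left _ _)
            rw [hSsucc] at this
            rw [hxkb]
            exact le_min this.le hyt
        refine Set.mem_iUnion.mpr ⟨⟨k, hkn⟩, hxky, ?_⟩
        have := hba ⟨k, hkn⟩
        simp only [Fin.val_mk] at this ⊢
        rw [this] at hykb
        exact hykb
    rw [hunion, Real.volume_Icc, sub_zero]
end
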